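/- arXiv:0709.0695 — 2 statements merged into one kernel-verified Lean document; each statement's English description precedes it below -/
import Mathlib

section
/- Let K_k and K_ℓ be symmetric 2×2 matrices on a Euclidean plane, with K_ℓ negative semidefinite, and suppose K_k has eigenvalues λ₁ < 0 < λ₂ with |λ₁| > λ₂ and negative unit eigendirection e₁. If the critical angle θ_c = arcsin √(λ₁/(λ₁ − λ₂)) satisfies θ_c > π/4, then there exist orthonormal vectors v₁, v₂ with ⟨v_i, K_k v_i⟩ < 0 and ⟨v_i, K_ℓ v_i⟩ ≤ 0 for i = 1, 2 (take v₁, v₂ at angles ±π/4 from e₁). -/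
open Real Matrix

/-! Along the unit vectors `(e₁ ± e₂)/√2`, at angle `π/4` from `e₁`, the quadratic form of `Kk`
takes the average `(l₁ + l₂)/2` of its eigenvalues. This is negative exactly when `|l₁| > l₂`,
i.e. when `sin² θ_c = l₁/(l₁ - l₂) > 1/2`. -/

/-- The quadratic form `v ↦ ⟨v, K v⟩` of a 2×2 matrix on ℝ². -/
def quadForm (K : Matrix (Fin 2) (Fin 2) ℝ) (v : Fin 2 → ℝ) : ℝ :=
  v ⬝ᵥ K.mulVec v

theorem dotProduct_add_smul_of_orthogonal {ι R : Type*} [Fintype ι] [CommRing R]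
    {e₁ e₂ : ι → R} (h : e₁ ⬝ᵥ e₂ = 0) (a b c d : R) :
    (a • e₁ + b • e₂) ⬝ᵥ (c • e₁ + d • e₂) = a * c * (e₁ ⬝ᵥ e₁) + b * d * (e₂ ⬝ᵥ e₂) := by
  have h' : e₂ ⬝ᵥ e₁ = 0 := by rw [dotProduct_comm, h]
  simp only [add_dotProduct, dotProduct_add, smul_dotProduct, dotProduct_smul, h, h',
    smul_eq_mul]
  ring

theorem quadForm_add_smul_of_eigen {K : Matrix (Fin 2) (Fin 2) ℝ} {e₁ e₂ : Fin 2 → ℝ} {l₁ l₂ : ℝ}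
    (h : e₁ ⬝ᵥ e₂ = 0) (hK₁ : K *ᵥ e₁ = l₁ • e₁) (hK₂ : K *ᵥ e₂ = l₂ • e₂) (a b : ℝ) :
    quadForm K (a • e₁ + b • e₂) = a ^ 2 * l₁ * (e₁ ⬝ᵥ e₁) + b ^ 2 * l₂ * (e₂ ⬝ᵥ e₂) := by
  rw [quadForm, mulVec_add, mulVec_smul, mulVec_smul, hK₁, hK₂, smul_smul, smul_smul,
    dotProduct_add_smul_of_orthogonal h]
  ring

theorem exists_orthonormal_pair_quadForm_neg {K : Matrix (Fin 2) (Fin 2) ℝ}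
    {e₁ e₂ : Fin 2 → ℝ} {l₁ l₂ : ℝ}
    (he₁ : e₁ ⬝ᵥ e₁ = 1) (he₂ : e₂ ⬝ᵥ e₂ = 1) (he₁₂ : e₁ ⬝ᵥ e₂ = 0)
    (hK₁ : K *ᵥ e₁ = l₁ • e₁) (hK₂ : K *ᵥ e₂ = l₂ • e₂) (hsum : l₁ + l₂ < 0) :
    ∃ v₁ v₂ : Fin 2 → ℝ, v₁ ⬝ᵥ v₁ = 1 ∧ v₂ ⬝ᵥ v₂ = 1 ∧ v₁ ⬝ᵥ v₂ = 0 ∧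
      quadForm K v₁ < 0 ∧ quadForm K v₂ < 0 := by
  set c : ℝ := (√2)⁻¹
  have hc : c ^ 2 = 1 / 2 := by rw [inv_pow, sq_sqrt zero_le_two, one_div]
  refine ⟨c • e₁ + c • e₂, c • e₁ + (-c) • e₂, ?_, ?_, ?_, ?_, ?_⟩
  all_goals
    simp only [dotProduct_add_smul_of_orthogonal he₁₂, quadForm_add_smul_of_eigen he₁₂ hK₁ hK₂,
      he₁, he₂, neg_sq, hc, ← sq]
  all_goals linarith

theorem stmt_12_general (Kk Kl : Matrix (Fin 2) (Fin 2) ℝ)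
    (hKlsemi : ∀ v : Fin 2 → ℝ, quadForm Kl v ≤ 0)
    (l₁ l₂ : ℝ) (hl₁ : l₁ < 0) (habs : |l₁| > l₂)
    (e₁ e₂ : Fin 2 → ℝ)
    (he₁ : e₁ ⬝ᵥ e₁ = 1) (he₂ : e₂ ⬝ᵥ e₂ = 1) (he₁₂ : e₁ ⬝ᵥ e₂ = 0)
    (hKe₁ : Kk.mulVec e₁ = l₁ • e₁) (hKe₂ : Kk.mulVec e₂ = l₂ • e₂) :
    ∃ v₁ v₂ : Fin 2 → ℝ,
      v₁ ⬝ᵥ v₁ = 1 ∧ v₂ ⬝ᵥ v₂ = 1 ∧ v₁ ⬝ᵥ v₂ = 0 ∧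
      quadForm Kk v₁ < 0 ∧ quadForm Kk v₂ < 0 ∧
      quadForm Kl v₁ ≤ 0 ∧ quadForm Kl v₂ ≤ 0 := by
  have hsum : l₁ + l₂ < 0 := by
    rw [abs_of_neg hl₁] at habs
    linarith
  obtain ⟨v₁, v₂, hv₁, hv₂, hv₁₂, hKv₁, hKv₂⟩ :=
    exists_orthonormal_pair_quadForm_neg he₁ he₂ he₁₂ hKe₁ hKe₂ hsum
  exact ⟨v₁, v₂, hv₁, hv₂, hv₁₂, hKv₁, hKv₂, hKlsemi v₁, hKlsemi v₂⟩

theorem stmt_12 (Kk Kl : Matrix (Fin 2) (Fin 2) ℝ)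
    (hKk : Kk.IsSymm) (hKl : Kl.IsSymm)
    (hKlsemi : ∀ v : Fin 2 → ℝ, quadForm Kl v ≤ 0)
    (l₁ l₂ : ℝ) (hl₁ : l₁ < 0) (hl₂ : 0 < l₂) (habs : |l₁| > l₂)
    (e₁ e₂ : Fin 2 → ℝ)
    (he₁ : e₁ ⬝ᵥ e₁ = 1) (he₂ : e₂ ⬝ᵥ e₂ = 1) (he₁₂ : e₁ ⬝ᵥ e₂ = 0)
    (hKe₁ : Kk.mulVec e₁ = l₁ • e₁) (hKe₂ : Kk.mulVec e₂ = l₂ • e₂)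
    (hangle : Real.arcsin (Real.sqrt (l₁ / (l₁ - l₂))) > π / 4) :
    ∃ v₁ v₂ : Fin 2 → ℝ,
      v₁ ⬝ᵥ v₁ = 1 ∧ v₂ ⬝ᵥ v₂ = 1 ∧ v₁ ⬝ᵥ v₂ = 0 ∧
      quadForm Kk v₁ < 0 ∧ quadForm Kk v₂ < 0 ∧
      quadForm Kl v₁ ≤ 0 ∧ quadForm Kl v₂ ≤ 0 :=
  stmt_12_general Kk Kl hKlsemi l₁ l₂ hl₁ habs e₁ e₂ he₁ he₂ he₁₂ hKe₁ hKe₂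
end

section
/- Let V be a Lorentzian vector space of signature (−,+,+,+), ℓ, k future-pointing null with g(ℓ,k) = −1. Let K_k, K_ℓ be symmetric 2×2 matrices with tr K_k < 0 and tr K_ℓ < 0 (so the surface is future trapped). Then there exist orthonormal vectors u₁, u₂ with ⟨u_i, K_k u_i⟩ ≤ 0 for i = 1,2, and orthonormal vectors w₁, w₂ with ⟨w_i, K_ℓ w_i⟩ ≤ 0 for i = 1,2; but it is not always possible to choose a single orthonormal pair v₁, v₂ satisfying both ⟨v_i, K_k v_i⟩ ≤ 0 and ⟨v_i, K_ℓ v_i⟩ ≤ 0: there exist K_k, K_ℓ with negative traces for which no orthonormal pair v₁, v₂ satisfies all four inequalities simultaneously. -/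
open Real Matrix

lemma quadForm_pair (K : Matrix (Fin 2) (Fin 2) ℝ) (x y : ℝ) :
    quadForm K ![x, y] = K 0 0 * x^2 + (K 0 1 + K 1 0) * (x*y) + K 1 1 * y^2 := by
  simp [quadForm, Matrix.mulVec, dotProduct, Fin.sum_univ_two]
  ring

lemma quadForm_eq (K : Matrix (Fin 2) (Fin 2) ℝ) (v : Fin 2 → ℝ) :
    quadForm K v = K 0 0 * (v 0)^2 + (K 0 1 + K 1 0) * (v 0 * v 1) + K 1 1 * (v 1)^2 := by
  simp [quadForm, Matrix.mulVec, dotProduct, Fin.sum_univ_two]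
  ring

set_option maxHeartbeats 1000000 in
lemma exists_ortho_pair (K : Matrix (Fin 2) (Fin 2) ℝ) (hs : K.IsSymm) (ht : K.trace < 0) :
    ∃ u₁ u₂ : Fin 2 → ℝ, u₁ ⬝ᵥ u₁ = 1 ∧ u₂ ⬝ᵥ u₂ = 1 ∧ u₁ ⬝ᵥ u₂ = 0 ∧
      quadForm K u₁ ≤ 0 ∧ quadForm K u₂ ≤ 0 := by
  have hsym : K 1 0 = K 0 1 := by
    have := congrFun (congrFun hs 1) 0
    simpa [Matrix.transpose_apply] using this.symm
  set a := K 0 0 with ha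
  set b := K 0 1 with hb
  set d := K 1 1 with hd
  have htr : a + d < 0 := by
    have := ht
    rw [Matrix.trace_fin_two] at this
    exact this
  by_cases h : a = d ∧ b = 0
  · obtain ⟨h1, h2⟩ := h
    refine ⟨![1,0], ![0,1], ?_, ?_, ?_, ?_, ?_⟩
    · simp [dotProduct, Fin.sum_univ_two]
    · simp [dotProduct, Fin.sum_univ_two]
    · simp [dotProduct, Fin.sum_univ_two]
    · rw [quadForm_pair]; rw [← ha, ← hb, ← hd, hsym]; nlinarith
    · rw [quadForm_pair]; rw [← ha, ← hb, ← hd, hsym]; nlinarith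
  · -- rotate the basis
    have hpos : 0 < (a-d)^2 + 4*b^2 := by
      rcases not_and_or.mp h with h' | h'
      · have hne : a - d ≠ 0 := sub_ne_zero.mpr h'
        positivity
      · positivity
    obtain ⟨r, hrdef⟩ : ∃ z, z = Real.sqrt ((a-d)^2 + 4*b^2) := ⟨_, rfl⟩
    have hrpos : 0 < r := by rw [hrdef]; exact Real.sqrt_pos.mpr hpos
    have hr2 : r^2 = (a-d)^2 + 4*b^2 := by rw [hrdef]; exact Real.sq_sqrt (le_of_lt hpos)
    obtain ⟨c, hcdef⟩ : ∃ z, z = 2*b/r := ⟨_, rfl⟩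
    obtain ⟨s, hsdef⟩ : ∃ z, z = (d-a)/r := ⟨_, rfl⟩
    have hcs : c^2 + s^2 = 1 := by
      rw [hcdef, hsdef]
      field_simp
      nlinarith [hr2]
    have h1c : 0 ≤ (1+c)/2 := by nlinarith [sq_nonneg s, sq_nonneg (c+1)]
    have h2c : 0 ≤ (1-c)/2 := by nlinarith [sq_nonneg s, sq_nonneg (c-1)]
    obtain ⟨p, hpdef⟩ : ∃ z, z = Real.sqrt ((1+c)/2) := ⟨_, rfl⟩
    obtain ⟨t, htdef⟩ : ∃ z : ℝ, z = if 0 ≤ s then 1 else -1 := ⟨_, rfl⟩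
    obtain ⟨qv, hqdef⟩ : ∃ z, z = t * Real.sqrt ((1-c)/2) := ⟨_, rfl⟩
    have hp2 : p^2 = (1+c)/2 := by rw [hpdef]; exact Real.sq_sqrt h1c
    have ht2 : t^2 = 1 := by rw [htdef]; split <;> norm_num
    have hq2 : qv^2 = (1-c)/2 := by
      rw [hqdef, mul_pow, ht2, one_mul, Real.sq_sqrt h2c]
    have hpq : 2*(p*qv) = s := by
      have hmul : Real.sqrt ((1+c)/2) * Real.sqrt ((1-c)/2)
          = Real.sqrt ((s/2)^2) := by
        rw [← Real.sqrt_mul h1c]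
        congr 1
        nlinarith [hcs]
      have habs : Real.sqrt ((s/2)^2) = |s/2| := Real.sqrt_sq_eq_abs _
      have habs2 : t * |s/2| = s/2 := by
        rw [htdef]
        rcases le_or_gt 0 s with hst | hst
        · rw [if_pos hst, one_mul, abs_of_nonneg (by linarith : (0:ℝ) ≤ s/2)]
        · rw [if_neg (not_le.mpr hst), abs_of_neg (by linarith : (s/2:ℝ) < 0)]; ring
      rw [hqdef, hpdef]
      rw [show Real.sqrt ((1+c)/2) * (t * Real.sqrt ((1-c)/2))
          = t * (Real.sqrt ((1+c)/2) * Real.sqrt ((1-c)/2)) by ring, hmul, habs, habs2]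
      ring
    have hkey : (a-d)*c/2 + b*s = 0 := by
      rw [hcdef, hsdef]; field_simp; ring
    have hnorm : p^2 + qv^2 = 1 := by rw [hp2, hq2]; ring
    refine ⟨![p, qv], ![-qv, p], ?_, ?_, ?_, ?_, ?_⟩
    · simp [dotProduct, Fin.sum_univ_two]; nlinarith [hnorm]
    · simp [dotProduct, Fin.sum_univ_two]; nlinarith [hnorm]
    · simp [dotProduct, Fin.sum_univ_two]; ring
    · rw [quadForm_pair, ← ha, ← hb, ← hd, hsym]
      have : a * p^2 + (b+b) * (p*qv) + d * qv^2 = (a+d)/2 := by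
        rw [hp2, hq2]
        have h2 : (b+b) * (p*qv) = b * (2*(p*qv)) := by ring
        rw [h2, hpq]
        nlinarith [hkey]
      rw [this]; linarith
    · rw [quadForm_pair, ← ha, ← hb, ← hd, hsym]
      have : a * (-qv)^2 + (b+b) * (-qv*p) + d * p^2 = (a+d)/2 := by
        have h2 : (b+b) * (-qv*p) = -(b * (2*(p*qv))) := by ring
        rw [show a * (-qv)^2 = a * qv^2 by ring, h2, hpq, hp2, hq2]
        nlinarith [hkey]
      rw [this]; linarith

set_option maxHeartbeats 1000000 in
theorem stmt_17 :
    (∀ Kk Kl : Matrix (Fin 2) (Fin 2) ℝ, Kk.IsSymm → Kl.IsSymm →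
      Kk.trace < 0 → Kl.trace < 0 →
      (∃ u₁ u₂ : Fin 2 → ℝ, u₁ ⬝ᵥ u₁ = 1 ∧ u₂ ⬝ᵥ u₂ = 1 ∧ u₁ ⬝ᵥ u₂ = 0 ∧
        quadForm Kk u₁ ≤ 0 ∧ quadForm Kk u₂ ≤ 0) ∧
      (∃ w₁ w₂ : Fin 2 → ℝ, w₁ ⬝ᵥ w₁ = 1 ∧ w₂ ⬝ᵥ w₂ = 1 ∧ w₁ ⬝ᵥ w₂ = 0 ∧
        quadForm Kl w₁ ≤ 0 ∧ quadForm Kl w₂ ≤ 0)) ∧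
    (∃ Kk Kl : Matrix (Fin 2) (Fin 2) ℝ, Kk.IsSymm ∧ Kl.IsSymm ∧
      Kk.trace < 0 ∧ Kl.trace < 0 ∧
      ¬ ∃ v₁ v₂ : Fin 2 → ℝ, v₁ ⬝ᵥ v₁ = 1 ∧ v₂ ⬝ᵥ v₂ = 1 ∧ v₁ ⬝ᵥ v₂ = 0 ∧
        quadForm Kk v₁ ≤ 0 ∧ quadForm Kk v₂ ≤ 0 ∧
        quadForm Kl v₁ ≤ 0 ∧ quadForm Kl v₂ ≤ 0) := by
  constructor
  · intro Kk Kl hsk hsl htk htl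
    exact ⟨exists_ortho_pair Kk hsk htk, exists_ortho_pair Kl hsl htl⟩
  · refine ⟨!![(-3:ℝ),0;0,1], !![(-1:ℝ),-2;-2,-1], ?_, ?_, ?_, ?_, ?_⟩
    · ext i j; fin_cases i <;> fin_cases j <;> simp [Matrix.transpose_apply]
    · ext i j; fin_cases i <;> fin_cases j <;> simp [Matrix.transpose_apply]
    · norm_num [Matrix.trace_fin_two]
    · norm_num [Matrix.trace_fin_two]
    · rintro ⟨v₁, v₂, hn1, hn2, ho, hk1, hk2, hl1, hl2⟩
      set x := v₁ 0 with hx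
      set y := v₁ 1 with hy
      set p := v₂ 0 with hp
      set q := v₂ 1 with hq
      have e1 : x*x + y*y = 1 := by
        simpa [dotProduct, Fin.sum_univ_two] using hn1
      have e2 : p*p + q*q = 1 := by
        simpa [dotProduct, Fin.sum_univ_two] using hn2
      have e3 : x*p + y*q = 0 := by
        simpa [dotProduct, Fin.sum_univ_two] using ho
      have ik1 : -3*x^2 + y^2 ≤ 0 := by
        rw [quadForm_eq] at hk1
        norm_num at hk1
        nlinarith [hk1]
      have ik2 : -3*p^2 + q^2 ≤ 0 := by
        rw [quadForm_eq] at hk2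
        norm_num at hk2
        nlinarith [hk2]
      have il1 : -(x^2) - 4*(x*y) - y^2 ≤ 0 := by
        rw [quadForm_eq] at hl1
        norm_num at hl1
        nlinarith [hl1]
      have il2 : -(p^2) - 4*(p*q) - q^2 ≤ 0 := by
        rw [quadForm_eq] at hl2
        norm_num at hl2
        nlinarith [hl2]
      have h1 : p^2 = y^2 := by
        linear_combination (x*p - y*q)*e3 - p^2*e1 + y^2*e2
      have h2 : q^2 = x^2 := by
        linear_combination (y*q - x*p)*e3 - q^2*e1 + x^2*e2
      have h3 : p*q = -(x*y) := by
        linear_combination (x*q + y*p)*e3 - (p*q)*e1 - (x*y)*e2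
      -- now: y² ≤ 3x², x² ≤ 3y², xy ≥ -1/4, xy ≤ 1/4, x²+y²=1 : contradiction
      have b1 : x*y + 1/4 ≥ 0 := by nlinarith [il1, e1]
      have b2 : 1/4 - x*y ≥ 0 := by nlinarith [il2, h1, h2, h3, e1]
      have b3 : 3*x^2 - y^2 ≥ 0 := by linarith
      have b4 : 3*y^2 - x^2 ≥ 0 := by nlinarith [ik2, h1, h2]
      nlinarith [mul_nonneg b1 b2, mul_nonneg b3 b4, e1, sq_nonneg (x*y)]
end
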